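/- Fix β > 0, n, m ∈ ℕ with n < m, and L > 0. Let β_fn : ℝ^n × ℝ^n → ℂ be a Schwartz function. Then ∫_{Λ_L^m} |N_{L,m}^{(n)}(β_fn)(p,q)|² dμ_L^m(p,q) ≤ m^{2n} · L^{−n} · ∫_{ℝ^n} ∫_{ℝ^n} |β_fn(p',q')|² dq' dμ̆^n(p'). -/

import Mathlib

open MeasureTheory

/-- The Maxwellian probability measure `μ̆` on `ℝ`, with density `(β/π)^{1/2} e^{-βp²}`. -/
noncomputable def maxwellMeasure (β : ℝ) : Measure ℝ :=
  volume.withDensity fun p => ENNReal.ofReal (Real.sqrt (β / Real.pi) * Real.exp (-β * p ^ 2))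

/-- The canonical Gibbs measure on `Λ_L^m = ℝ^m × [-L/2,L/2)^m` with density
`L^{-m} (β/π)^{m/2} e^{-β|p|²}` with respect to Lebesgue measure `dp dq`. -/
noncomputable def gibbsMeasure (β L : ℝ) (m : ℕ) :
    Measure ((Fin m → ℝ) × (Fin m → ℝ)) :=
  (((volume : Measure ((Fin m → ℝ) × (Fin m → ℝ))).restrict
      (Set.univ ×ˢ Set.univ.pi fun _ : Fin m => Set.Ico (-L / 2) (L / 2))).withDensity
    fun pq => ENNReal.ofReal
      (L ^ (-(m : ℝ)) * (β / Real.pi) ^ ((m : ℝ) / 2) * Real.exp (-β * ∑ i, pq.1 i ^ 2)))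

/-- The symmetrization `N_{L,m}^{(n)}(β_fn)(p,q) = Σ β_fn(p_{j_1},…,p_{j_n},q_{j_1},…,q_{j_n})`,
summed over `n`-tuples of pairwise distinct indices in `{1,…,m}`. -/
noncomputable def symmetrize (n m : ℕ) (f : ((Fin n → ℝ) × (Fin n → ℝ)) → ℂ)
    (p q : Fin m → ℝ) : ℂ :=
  ∑ j ∈ Finset.univ.filter (fun j : Fin n → Fin m => Function.Injective j),
    f (p ∘ j, q ∘ j)

/-! The Gibbs measure is the product of `m` Maxwellians in `p` with the uniform probability
measure on `[-L/2, L/2)^m` in `q`. Restricting coordinates along an injective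
`j : Fin n → Fin m` pushes such a product of probability measures forward to the same product
with `n` factors, and the `n`-fold uniform measure is `L^{-n}` times Lebesgue measure on the box.
Cauchy–Schwarz over the at most `m^n` injective tuples contributes one factor `m^n`, their number
the other. A Schwartz majorant of `‖β_fn (p', q')‖²` that is integrable in `q'` uniformly in `p'`
makes the real integrals on the right-hand side agree with the `ℝ≥0∞`-valued ones. -/

open MeasureTheory ProbabilityTheory Set Function
open scoped ENNReal

namespace MeasureTheory

theorem lintegral_fin_nat_prod_eq_prod {k : ℕ} {α : Type*} [MeasurableSpace α]
    {μ : Fin k → Measure α} [∀ i, SigmaFinite (μ i)]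
    {f : Fin k → α → ℝ≥0∞} (hf : ∀ i, Measurable (f i)) :
    ∫⁻ x, ∏ i, f i (x i) ∂(Measure.pi μ) = ∏ i, ∫⁻ x, f i x ∂(μ i) := by
  induction k with
  | zero => simp
  | succ k ih =>
    calc
      _ = ∫⁻ x : α × (Fin k → α),
          f 0 x.1 * ∏ i : Fin k, f (Fin.succ i) (x.2 i)
          ∂((μ 0).prod (Measure.pi (fun i ↦ μ i.succ))) := by
        rw [← ((measurePreserving_piFinSuccAbove μ 0).symm).lintegral_comp_emb
          (MeasurableEquiv.measurableEmbedding _)]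
        simp_rw [MeasurableEquiv.piFinSuccAbove_symm_apply, Fin.insertNthEquiv,
          Fin.prod_univ_succ, Fin.insertNth_zero, Equiv.coe_fn_mk, Fin.cons_succ,
          Fin.zero_succAbove, cast_eq, Fin.cons_zero]
      _ = (∫⁻ x, f 0 x ∂μ 0) * ∏ i : Fin k, ∫⁻ x, f (Fin.succ i) x ∂(μ i.succ) := by
        rw [← ih fun i => hf i.succ, ← lintegral_prod_mul (hf 0).aemeasurable
          (Finset.measurable_prod _ fun i _ =>
            (hf i.succ).comp (measurable_pi_apply i)).aemeasurable]
      _ = ∏ i, ∫⁻ x, f i x ∂(μ i) := by rw [Fin.prod_univ_succ]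

theorem Measure.pi_withDensity {k : ℕ} {α : Type*} [MeasurableSpace α]
    (μ : Fin k → Measure α) [∀ i, SigmaFinite (μ i)]
    {f : Fin k → α → ℝ≥0∞} (hf : ∀ i, Measurable (f i))
    [∀ i, SigmaFinite ((μ i).withDensity (f i))] :
    Measure.pi (fun i => (μ i).withDensity (f i)) =
      (Measure.pi μ).withDensity fun x => ∏ i, f i (x i) := by
  refine Measure.pi_eq fun s hs => ?_
  rw [withDensity_apply _ (.univ_pi hs), Measure.restrict_pi_pi, lintegral_fin_nat_prod_eq_prod hf]
  simp_rw [withDensity_apply _ (hs _)]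

theorem Measure.pi_cond {k : ℕ} {α : Type*} [MeasurableSpace α] (μ : Measure α) [SigmaFinite μ]
    {s : Set α} (h0 : μ s ≠ 0) (htop : μ s ≠ ∞) :
    Measure.pi (fun _ : Fin k => μ[|s]) =
      ((Measure.pi fun _ => μ).restrict (univ.pi fun _ => s)).withDensity
        fun _ => (μ s)⁻¹ ^ k := by
  have hcond : μ[|s] = (μ.restrict s).withDensity fun _ => (μ s)⁻¹ := by
    rw [withDensity_const]; rfl
  have : IsProbabilityMeasure ((μ.restrict s).withDensity fun _ => (μ s)⁻¹) :=
    hcond ▸ cond_isProbabilityMeasure_of_finite h0 htop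
  rw [hcond, Measure.pi_withDensity _ fun _ => measurable_const, Measure.restrict_pi_pi]
  simp

theorem measurePreserving_comp_of_injective {ι κ α : Type*} [Fintype ι] [Fintype κ]
    [MeasurableSpace α] (μ : κ → Measure α) [∀ k, IsProbabilityMeasure (μ k)]
    {j : ι → κ} (hj : Injective j) :
    MeasurePreserving (fun x : κ → α => x ∘ j) (Measure.pi μ) (Measure.pi fun i => μ (j i)) := by
  classical
  have hmeas : Measurable fun x : κ → α => x ∘ j := by fun_prop
  refine ⟨hmeas, (Measure.pi_eq fun s _ => ?_).symm⟩
  have hpre : (fun x : κ → α => x ∘ j) ⁻¹' univ.pi s =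
      univ.pi (Function.extend j s fun _ => univ) := by
    ext x
    simp only [mem_preimage, mem_univ_pi, comp_apply]
    refine ⟨fun h k => ?_, fun h i => by simpa [hj.extend_apply] using h (j i)⟩
    by_cases hk : ∃ i, j i = k
    · obtain ⟨i, rfl⟩ := hk
      simpa [hj.extend_apply] using h i
    · simp [extend_apply' _ _ _ hk]
  rw [Measure.map_apply hmeas (.univ_pi ‹_›), hpre, Measure.pi_pi]
  refine (Fintype.prod_of_injective j hj _ _ (fun k hk => ?_) fun i => ?_).symm
  · rw [extend_apply' _ _ _ (by simpa using hk), measure_univ]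
  · rw [hj.extend_apply]

end MeasureTheory

section Gibbs

variable {β L : ℝ}

theorem isProbabilityMeasure_maxwellMeasure (hβ : 0 < β) :
    IsProbabilityMeasure (maxwellMeasure β) := by
  constructor
  rw [maxwellMeasure, withDensity_apply _ MeasurableSet.univ, Measure.restrict_univ,
    ← ofReal_integral_eq_lintegral_ofReal ((integrable_exp_neg_mul_sq hβ).const_mul _)
      (ae_of_all _ fun p => by positivity),
    integral_const_mul, integral_gaussian, ← Real.sqrt_mul (by positivity),
    div_mul_div_cancel₀ Real.pi_ne_zero, div_self hβ.ne', Real.sqrt_one, ENNReal.ofReal_one]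

theorem volume_Ico_neg_div_two (L : ℝ) : volume (Ico (-L / 2) (L / 2)) = ENNReal.ofReal L := by
  rw [Real.volume_Ico]; ring_nf

theorem volume_Ico_neg_div_two_ne_zero (hL : 0 < L) : volume (Ico (-L / 2) (L / 2)) ≠ 0 := by
  rw [volume_Ico_neg_div_two]; simpa using hL

theorem isProbabilityMeasure_cond_Ico (hL : 0 < L) :
    IsProbabilityMeasure (volume[|Ico (-L / 2) (L / 2)]) :=
  cond_isProbabilityMeasure_of_finite (volume_Ico_neg_div_two_ne_zero hL) (by simp)

theorem pi_cond_Ico (hL : 0 < L) (k : ℕ) :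
    Measure.pi (fun _ : Fin k => volume[|Ico (-L / 2) (L / 2)]) =
      (volume.restrict (univ.pi fun _ => Ico (-L / 2) (L / 2))).withDensity
        fun _ => (ENNReal.ofReal L)⁻¹ ^ k := by
  rw [Measure.pi_cond _ (volume_Ico_neg_div_two_ne_zero hL) (by simp), volume_Ico_neg_div_two,
    volume_pi]

theorem gibbs_density_eq_prod_mul (hβ : 0 < β) (hL : 0 < L) (m : ℕ) (p : Fin m → ℝ) :
    ENNReal.ofReal (L ^ (-(m : ℝ)) * (β / Real.pi) ^ ((m : ℝ) / 2) *
        Real.exp (-β * ∑ i, p i ^ 2)) =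
      (∏ i, ENNReal.ofReal (Real.sqrt (β / Real.pi) * Real.exp (-β * p i ^ 2))) *
        (ENNReal.ofReal L)⁻¹ ^ m := by
  rw [← ENNReal.ofReal_prod_of_nonneg fun i _ => by positivity, ← ENNReal.ofReal_inv_of_pos hL,
    ← ENNReal.ofReal_pow (by positivity), ← ENNReal.ofReal_mul (by positivity)]
  congr 1
  rw [Finset.prod_mul_distrib, Finset.prod_const, Finset.card_univ, Fintype.card_fin,
    ← Real.exp_sum, ← Finset.mul_sum, Real.sqrt_eq_rpow, ← Real.rpow_natCast,
    ← Real.rpow_mul (by positivity), Real.rpow_neg hL.le, Real.rpow_natCast, inv_pow]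
  ring_nf

theorem gibbsMeasure_eq_prod (hβ : 0 < β) (hL : 0 < L) (m : ℕ) :
    gibbsMeasure β L m = (Measure.pi fun _ : Fin m => maxwellMeasure β).prod
      (Measure.pi fun _ : Fin m => volume[|Ico (-L / 2) (L / 2)]) := by
  have : IsProbabilityMeasure (maxwellMeasure β) := isProbabilityMeasure_maxwellMeasure hβ
  have hd : Measurable fun p : ℝ =>
      ENNReal.ofReal (Real.sqrt (β / Real.pi) * Real.exp (-β * p ^ 2)) := by fun_prop
  rw [maxwellMeasure, Measure.pi_withDensity _ fun _ => hd, pi_cond_Ico hL, ← volume_pi,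
    prod_withDensity (by fun_prop) measurable_const, ← Measure.restrict_univ (μ := volume),
    Measure.prod_restrict, Measure.restrict_univ,
    ← Measure.volume_eq_prod, gibbsMeasure]
  simp_rw [gibbs_density_eq_prod_mul hβ hL]

end Gibbs

section Symmetrize

variable {β L : ℝ} {n m : ℕ}

theorem lintegral_gibbsMeasure_comp_le (hβ : 0 < β) (hL : 0 < L) {j : Fin n → Fin m}
    (hj : Injective j) {g : (Fin n → ℝ) × (Fin n → ℝ) → ℝ≥0∞} (hg : Measurable g) :
    ∫⁻ pq, g (pq.1 ∘ j, pq.2 ∘ j) ∂gibbsMeasure β L m ≤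
      (ENNReal.ofReal L)⁻¹ ^ n *
        ∫⁻ p', (∫⁻ q', g (p', q')) ∂Measure.pi fun _ : Fin n => maxwellMeasure β := by
  have : IsProbabilityMeasure (maxwellMeasure β) := isProbabilityMeasure_maxwellMeasure hβ
  have : IsProbabilityMeasure (volume[|Ico (-L / 2) (L / 2)]) := isProbabilityMeasure_cond_Ico hL
  have hmp : MeasurePreserving (fun pq : (Fin m → ℝ) × (Fin m → ℝ) => (pq.1 ∘ j, pq.2 ∘ j))
      (gibbsMeasure β L m) ((Measure.pi fun _ : Fin n => maxwellMeasure β).prod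
        (Measure.pi fun _ : Fin n => volume[|Ico (-L / 2) (L / 2)])) := by
    rw [gibbsMeasure_eq_prod hβ hL]
    exact (measurePreserving_comp_of_injective _ hj).prod
      (measurePreserving_comp_of_injective _ hj)
  rw [hmp.lintegral_comp hg, lintegral_prod _ hg.aemeasurable,
    ← lintegral_const_mul _ hg.lintegral_prod_right']
  refine lintegral_mono fun p' => ?_
  rw [pi_cond_Ico hL, withDensity_const, lintegral_smul_measure]
  exact mul_le_mul_right (lintegral_mono' Measure.restrict_le_self le_rfl) _

theorem card_filter_injective_le :
    (Finset.univ.filter fun j : Fin n → Fin m => Injective j).card ≤ m ^ n :=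
  (Finset.card_filter_le _ _).trans (by simp)

theorem norm_symmetrize_sq_le (f : (Fin n → ℝ) × (Fin n → ℝ) → ℂ) (p q : Fin m → ℝ) :
    ‖symmetrize n m f p q‖ ^ 2 ≤
      (m : ℝ) ^ n * ∑ j ∈ Finset.univ.filter (fun j : Fin n → Fin m => Injective j),
        ‖f (p ∘ j, q ∘ j)‖ ^ 2 := by
  set I := Finset.univ.filter fun j : Fin n → Fin m => Injective j
  calc ‖symmetrize n m f p q‖ ^ 2 ≤ (∑ j ∈ I, ‖f (p ∘ j, q ∘ j)‖) ^ 2 := by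
        gcongr; exact norm_sum_le _ _
    _ ≤ I.card * ∑ j ∈ I, ‖f (p ∘ j, q ∘ j)‖ ^ 2 := sq_sum_le_card_mul_sum_sq
    _ ≤ (m : ℝ) ^ n * ∑ j ∈ I, ‖f (p ∘ j, q ∘ j)‖ ^ 2 := by
        gcongr; exact_mod_cast card_filter_injective_le

theorem lintegral_norm_symmetrize_sq_le (hβ : 0 < β) (hL : 0 < L)
    {f : (Fin n → ℝ) × (Fin n → ℝ) → ℂ} (hf : Measurable f) :
    ∫⁻ pq, ENNReal.ofReal (‖symmetrize n m f pq.1 pq.2‖ ^ 2) ∂gibbsMeasure β L m ≤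
      (m : ℝ≥0∞) ^ (2 * n) * ((ENNReal.ofReal L)⁻¹ ^ n *
        ∫⁻ p', (∫⁻ q', ENNReal.ofReal (‖f (p', q')‖ ^ 2))
          ∂Measure.pi fun _ : Fin n => maxwellMeasure β) := by
  set I := Finset.univ.filter fun j : Fin n → Fin m => Injective j
  set B := (ENNReal.ofReal L)⁻¹ ^ n * ∫⁻ p', (∫⁻ q', ENNReal.ofReal (‖f (p', q')‖ ^ 2))
    ∂Measure.pi fun _ : Fin n => maxwellMeasure β
  have hg : Measurable fun x => ENNReal.ofReal (‖f x‖ ^ 2) := by fun_prop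
  have hgj : ∀ j : Fin n → Fin m, Measurable fun pq : (Fin m → ℝ) × (Fin m → ℝ) =>
      ENNReal.ofReal (‖f (pq.1 ∘ j, pq.2 ∘ j)‖ ^ 2) := fun j => hg.comp (by fun_prop)
  have hptwise : ∀ pq : (Fin m → ℝ) × (Fin m → ℝ),
      ENNReal.ofReal (‖symmetrize n m f pq.1 pq.2‖ ^ 2) ≤
        (m : ℝ≥0∞) ^ n * ∑ j ∈ I, ENNReal.ofReal (‖f (pq.1 ∘ j, pq.2 ∘ j)‖ ^ 2) := fun pq => by
    rw [← ENNReal.ofReal_sum_of_nonneg fun _ _ => by positivity, ← ENNReal.ofReal_natCast,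
      ← ENNReal.ofReal_pow (by positivity), ← ENNReal.ofReal_mul (by positivity)]
    exact ENNReal.ofReal_le_ofReal (norm_symmetrize_sq_le f pq.1 pq.2)
  have hcard : (I.card : ℝ≥0∞) ≤ (m : ℝ≥0∞) ^ n := mod_cast card_filter_injective_le
  calc _ ≤ ∫⁻ pq, (m : ℝ≥0∞) ^ n *
          ∑ j ∈ I, ENNReal.ofReal (‖f (pq.1 ∘ j, pq.2 ∘ j)‖ ^ 2) ∂gibbsMeasure β L m :=
        lintegral_mono hptwise
    _ = (m : ℝ≥0∞) ^ n * ∑ j ∈ I,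
          ∫⁻ pq, ENNReal.ofReal (‖f (pq.1 ∘ j, pq.2 ∘ j)‖ ^ 2) ∂gibbsMeasure β L m := by
        rw [lintegral_const_mul _ (Finset.measurable_sum _ fun j _ => hgj j),
          lintegral_finsetSum _ fun j _ => hgj j]
    _ ≤ (m : ℝ≥0∞) ^ n * ∑ _j ∈ I, B := by
        gcongr with j hj
        exact lintegral_gibbsMeasure_comp_le hβ hL (Finset.mem_filter.mp hj).2 hg
    _ ≤ (m : ℝ≥0∞) ^ (2 * n) * B := by
        rw [Finset.sum_const, nsmul_eq_mul, ← mul_assoc, two_mul, pow_add]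
        gcongr

end Symmetrize

namespace SchwartzMap

variable {E F V : Type*} [NormedAddCommGroup E] [NormedSpace ℝ E]
  [NormedAddCommGroup F] [NormedSpace ℝ F] [FiniteDimensional ℝ F]
  [MeasurableSpace F] [BorelSpace F] [NormedAddCommGroup V] [NormedSpace ℝ V]

theorem exists_integrable_norm_sq_le_snd (μ : Measure F) [μ.IsAddHaarMeasure]
    (f : 𝓢(E × F, V)) : ∃ g : F → ℝ, Integrable g μ ∧ ∀ x y, ‖f (x, y)‖ ^ 2 ≤ g y := by
  set k := Module.finrank ℝ F + 1
  set C := 2 ^ k * (Finset.Iic (k, 0)).sup (fun m => SchwartzMap.seminorm ℝ m.1 m.2) f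
  set C₀ := SchwartzMap.seminorm ℝ 0 0 f
  refine ⟨fun y => C₀ * (C * (1 + ‖y‖) ^ (-(k : ℝ))),
    ((integrable_one_add_norm (by simp [k])).const_mul _).const_mul _, fun x y => ?_⟩
  have hdecay : (1 + ‖y‖) ^ k * ‖f (x, y)‖ ≤ C := by
    have h := one_add_le_sup_seminorm_apply (𝕜 := ℝ) (m := (k, 0)) le_rfl le_rfl f (x, y)
    rw [norm_iteratedFDeriv_zero] at h
    refine le_trans ?_ h
    gcongr
    exact norm_snd_le (x, y)
  have hbound : ‖f (x, y)‖ ≤ C * (1 + ‖y‖) ^ (-(k : ℝ)) := by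
    rw [Real.rpow_neg (by positivity), Real.rpow_natCast, ← div_eq_mul_inv,
      le_div_iff₀ (by positivity), mul_comm]
    exact hdecay
  rw [sq]
  exact mul_le_mul (norm_le_seminorm ℝ f _) hbound (norm_nonneg _) (apply_nonneg _ _)

theorem lintegral_lintegral_ofReal_norm_sq [MeasurableSpace E] [BorelSpace E]
    (μ : Measure F) [μ.IsAddHaarMeasure] (ν : Measure E) [IsFiniteMeasure ν] (f : 𝓢(E × F, V)) :
    ∫⁻ x, (∫⁻ y, ENNReal.ofReal (‖f (x, y)‖ ^ 2) ∂μ) ∂ν =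
      ENNReal.ofReal (∫ x, (∫ y, ‖f (x, y)‖ ^ 2 ∂μ) ∂ν) := by
  obtain ⟨g, hg, hle⟩ := exists_integrable_norm_sq_le_snd μ f
  have hslice : ∀ x, Integrable (fun y => ‖f (x, y)‖ ^ 2) μ := fun x =>
    hg.mono' (by fun_prop) (ae_of_all _ fun y => by
      rw [Real.norm_of_nonneg (by positivity)]; exact hle x y)
  have hW : Integrable (fun x => ∫ y, ‖f (x, y)‖ ^ 2 ∂μ) ν := by
    refine (integrable_const (∫ y, g y ∂μ)).mono'
      (StronglyMeasurable.integral_prod_right' (f := fun z : E × F => ‖f z‖ ^ 2)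
        (f.continuous.norm.pow 2).stronglyMeasurable).aestronglyMeasurable
      (ae_of_all _ fun x => ?_)
    rw [Real.norm_of_nonneg (integral_nonneg fun y => by positivity)]
    exact integral_mono (hslice x) hg (hle x)
  rw [ofReal_integral_eq_lintegral_ofReal hW
    (ae_of_all _ fun x => integral_nonneg fun y => by positivity)]
  exact lintegral_congr fun x => (ofReal_integral_eq_lintegral_ofReal (hslice x)
    (ae_of_all _ fun y => by positivity)).symm

end SchwartzMap

theorem symmetrize_L2_bound_general (β : ℝ) (hβ : 0 < β) (n m : ℕ)
    (L : ℝ) (hL : 0 < L) (βfn : SchwartzMap ((Fin n → ℝ) × (Fin n → ℝ)) ℂ) :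
    (∫ pq, ‖symmetrize n m (fun x => βfn x) pq.1 pq.2‖ ^ 2 ∂(gibbsMeasure β L m)) ≤
      (m : ℝ) ^ (2 * n) / L ^ n *
        ∫ p', (∫ q', ‖βfn (p', q')‖ ^ 2)
          ∂(Measure.pi fun _ : Fin n => maxwellMeasure β) := by
  have : IsProbabilityMeasure (maxwellMeasure β) := isProbabilityMeasure_maxwellMeasure hβ
  have hf : Measurable fun x => βfn x := βfn.continuous.measurable
  have hN : Measurable fun pq : (Fin m → ℝ) × (Fin m → ℝ) =>
      symmetrize n m (fun x => βfn x) pq.1 pq.2 :=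
    Finset.measurable_sum _ fun j _ => hf.comp (by fun_prop)
  rw [integral_eq_lintegral_of_nonneg_ae (ae_of_all _ fun _ => by positivity)
    (hN.norm.pow_const 2).aestronglyMeasurable]
  refine ENNReal.toReal_le_of_le_ofReal (mul_nonneg (by positivity)
    (integral_nonneg fun p' => integral_nonneg fun q' => by positivity)) ?_
  refine (lintegral_norm_symmetrize_sq_le hβ hL hf).trans_eq ?_
  rw [βfn.lintegral_lintegral_ofReal_norm_sq volume (Measure.pi fun _ => maxwellMeasure β),
    div_eq_mul_inv, ENNReal.ofReal_mul (by positivity),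
    ENNReal.ofReal_mul (by positivity), ENNReal.ofReal_inv_of_pos (by positivity),
    ENNReal.ofReal_pow hL.le, ENNReal.ofReal_pow (by positivity), ENNReal.ofReal_natCast,
    ENNReal.inv_pow, mul_assoc]

/-- Lemma 4.2, first claim:
`∫_{Λ_L^m} |N_{L,m}^{(n)}(β_fn)|² dμ_L^m ≤ m^{2n} L^{-n} ∫_{ℝ^n}∫_{ℝ^n} |β_fn|² dq' dμ̆^n(p')`. -/
theorem symmetrize_L2_bound (β : ℝ) (hβ : 0 < β) (n m : ℕ) (hnm : n < m)
    (L : ℝ) (hL : 0 < L) (βfn : SchwartzMap ((Fin n → ℝ) × (Fin n → ℝ)) ℂ) :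
    (∫ pq, ‖symmetrize n m (fun x => βfn x) pq.1 pq.2‖ ^ 2 ∂(gibbsMeasure β L m)) ≤
      (m : ℝ) ^ (2 * n) / L ^ n *
        ∫ p', (∫ q', ‖βfn (p', q')‖ ^ 2)
          ∂(Measure.pi fun _ : Fin n => maxwellMeasure β) :=
  symmetrize_L2_bound_general β hβ n m L hL βfn
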